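/- arXiv:2111.00979 — 8 statements merged into one kernel-verified Lean document; each statement's English description precedes it below -/
import Mathlib

section
/- The polynomial p(x) = x⁶ + 12x⁵ − 28x⁴ + 32x³ + 112x² − 64x − 64 has exactly one positive real root, and this root lies in the interval (0.995, 0.996). -/
private lemma sextic_neg_of_le {x : ℝ} (hx : 0 ≤ x) (hx2 : x ≤ 0.995) :
    x ^ 6 + 12 * x ^ 5 - 28 * x ^ 4 + 32 * x ^ 3 + 112 * x ^ 2 - 64 * x - 64 < 0 := by
  nlinarith [mul_nonneg (sub_nonneg.2 hx2) hx,
    mul_nonneg (mul_nonneg (mul_nonneg (sub_nonneg.2 hx2) (sub_nonneg.2 hx2)) (mul_nonneg (sub_nonneg.2 hx2) (sub_nonneg.2 hx2))) hx,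
    mul_nonneg (mul_nonneg (sub_nonneg.2 hx2) (sub_nonneg.2 hx2)) hx,
    mul_nonneg (mul_nonneg (mul_nonneg (sub_nonneg.2 hx2) (sub_nonneg.2 hx2)) (mul_nonneg (mul_nonneg (sub_nonneg.2 hx2) (sub_nonneg.2 hx2)) (sub_nonneg.2 hx2))) hx]

private lemma sextic_pos_of_ge {x : ℝ} (hx : (0.996:ℝ) ≤ x) :
    0 < x ^ 6 + 12 * x ^ 5 - 28 * x ^ 4 + 32 * x ^ 3 + 112 * x ^ 2 - 64 * x - 64 := by
  have ht : (0:ℝ) ≤ x - 0.996 := by linarith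
  nlinarith [pow_nonneg ht 2, pow_nonneg ht 3, pow_nonneg ht 4, pow_nonneg ht 5,
    pow_nonneg ht 6, ht]

private lemma sextic_inj {x y : ℝ} (hx1 : (0.995:ℝ) < x) (hx2 : x < 0.996)
    (hy1 : (0.995:ℝ) < y) (hy2 : y < 0.996) (hxy : x < y)
    (hpx : x ^ 6 + 12 * x ^ 5 - 28 * x ^ 4 + 32 * x ^ 3 + 112 * x ^ 2 - 64 * x - 64 = 0)
    (hpy : y ^ 6 + 12 * y ^ 5 - 28 * y ^ 4 + 32 * y ^ 3 + 112 * y ^ 2 - 64 * y - 64 = 0) :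
    False := by
  have hS : 0 < x^5 + x^4*y + x^3*y^2 + x^2*y^3 + x*y^4 + y^5
      + 12*(x^4 + x^3*y + x^2*y^2 + x*y^3 + y^4)
      - 28*(x^3 + x^2*y + x*y^2 + y^3)
      + 32*(x^2 + x*y + y^2) + 112*(x + y) - 64 := by
    have hx0 : (0:ℝ) < x := by linarith
    have hy0 : (0:ℝ) < y := by linarith
    have hx1' : x < 1 := by linarith
    have hy1' : y < 1 := by linarith
    have c1 : x^3 < 1 := by nlinarith
    have c2 : y^3 < 1 := by nlinarith
    have c3 : x^2*y < 1 := by nlinarith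
    have c4 : x*y^2 < 1 := by nlinarith
    have q1 : (0.99:ℝ) < x^2 := by nlinarith
    have q2 : (0.99:ℝ) < y^2 := by nlinarith
    have q3 : (0.99:ℝ) < x*y := by nlinarith
    have d1 : 0 < x^4 + x^3*y + x^2*y^2 + x*y^3 + y^4 := by positivity
    have d2 : 0 < x^5 + x^4*y + x^3*y^2 + x^2*y^3 + x*y^4 + y^5 := by positivity
    linarith
  have h := mul_pos (sub_pos.2 hxy) hS
  nlinarith [h, hpx, hpy]

/-- The sextic `x⁶ + 12x⁵ − 28x⁴ + 32x³ + 112x² − 64x − 64` (closure condition `r/f` for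
Poncelet pentagons inscribed in a parabola) has exactly one positive real root, and that
root lies in the interval `(0.995, 0.996)`. -/
theorem pentagon_closure_sextic_unique_positive_root :
    (∃! x : ℝ, 0 < x ∧
      x ^ 6 + 12 * x ^ 5 - 28 * x ^ 4 + 32 * x ^ 3 + 112 * x ^ 2 - 64 * x - 64 = 0) ∧
    (∀ x : ℝ, 0 < x →
      x ^ 6 + 12 * x ^ 5 - 28 * x ^ 4 + 32 * x ^ 3 + 112 * x ^ 2 - 64 * x - 64 = 0 →
      0.995 < x ∧ x < 0.996) := by
  have key : ∀ x : ℝ, 0 < x →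
      x ^ 6 + 12 * x ^ 5 - 28 * x ^ 4 + 32 * x ^ 3 + 112 * x ^ 2 - 64 * x - 64 = 0 →
      0.995 < x ∧ x < 0.996 := by
    intro x hx hp
    constructor
    · by_contra h
      push_neg at h
      exact absurd hp (ne_of_lt (sextic_neg_of_le hx.le h))
    · by_contra h
      push_neg at h
      exact absurd hp (ne_of_gt (sextic_pos_of_ge h))
  refine ⟨?_, key⟩
  -- existence via IVT
  set f : ℝ → ℝ := fun x => x ^ 6 + 12 * x ^ 5 - 28 * x ^ 4 + 32 * x ^ 3 + 112 * x ^ 2 - 64 * x - 64 with hf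
  have hcont : ContinuousOn f (Set.Icc (0.995:ℝ) 0.996) := by
    apply Continuous.continuousOn; continuity
  have hsub := intermediate_value_Icc (by norm_num : (0.995:ℝ) ≤ 0.996) hcont
  have h0 : (0:ℝ) ∈ Set.Icc (f 0.995) (f 0.996) := by
    constructor <;> simp only [hf] <;> norm_num
  obtain ⟨c, hc, hfc⟩ := hsub h0
  have hcpos : 0 < c := by have := hc.1; linarith
  refine ⟨c, ⟨hcpos, hfc⟩, ?_⟩
  intro y ⟨hy, hpy⟩
  obtain ⟨hy1, hy2⟩ := key y hy hpy
  obtain ⟨hc1, hc2⟩ := key c hcpos hfc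
  rcases lt_trichotomy y c with h | h | h
  · exact absurd (sextic_inj hy1 hy2 hc1 hc2 h hpy hfc) (by simp)
  · exact h
  · exact absurd (sextic_inj hc1 hc2 hy1 hy2 h hfc hpy) (by simp)
end

section
/- With the same parametrization of Poncelet triangles inscribed in the parabola x = −y²/(4f), the orthocenter of the triangle P₁P₂P₃ has constant x-coordinate equal to (5 − 2√2)f; i.e., for all admissible y₁, the orthocenter lies on the vertical line x = (5 − 2√2)f. -/
/-- Over the Poncelet triangle family inscribed in the parabola `x = −y²/(4f)`, the
orthocenter has constant abscissa `(5 − 2√2) f`. -/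
theorem orthocenter_on_vertical_line (f y₁ Δ y₂ y₃ : ℝ) (hf : 0 < f)
    (hΔ : Δ = Real.sqrt (16 * (8 * Real.sqrt 2 - 11) * f ^ 4 + 8 * f ^ 2 * y₁ ^ 2 + y₁ ^ 4))
    (hden : 8 * f ^ 2 * Real.sqrt 2 - 12 * f ^ 2 + y₁ ^ 2 ≠ 0)
    (hy₂ : y₂ = 2 * (1 - Real.sqrt 2) * (4 * f * y₁ + Δ) * f /
      (8 * f ^ 2 * Real.sqrt 2 - 12 * f ^ 2 + y₁ ^ 2))
    (hy₃ : y₃ = 2 * (Real.sqrt 2 - 1) * f * (Δ - 4 * f * y₁) /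
      (8 * f ^ 2 * Real.sqrt 2 - 12 * f ^ 2 + y₁ ^ 2))
    (P₁ P₂ P₃ H : ℝ × ℝ)
    (hP₁ : P₁ = (-(y₁ ^ 2) / (4 * f), y₁))
    (hP₂ : P₂ = (-(y₂ ^ 2) / (4 * f), y₂))
    (hP₃ : P₃ = (-(y₃ ^ 2) / (4 * f), y₃))
    (hndg : (P₂.1 - P₁.1) * (P₃.2 - P₁.2) - (P₂.2 - P₁.2) * (P₃.1 - P₁.1) ≠ 0)
    (hH₁ : (H.1 - P₁.1) * (P₂.1 - P₃.1) + (H.2 - P₁.2) * (P₂.2 - P₃.2) = 0)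
    (hH₂ : (H.1 - P₂.1) * (P₃.1 - P₁.1) + (H.2 - P₂.2) * (P₃.2 - P₁.2) = 0) :
    H.1 = (5 - 2 * Real.sqrt 2) * f := by
  have hf' : f ≠ 0 := ne_of_gt hf
  set s : ℝ := Real.sqrt 2 with hsdef
  have hs : s ^ 2 = 2 := Real.sq_sqrt (by norm_num)
  have hs0 : 0 ≤ s := Real.sqrt_nonneg 2
  have hs118 : (11 / 8 : ℝ) ≤ s := by nlinarith [hs, hs0]
  have hΔ2 : Δ ^ 2 = 16 * (8 * s - 11) * f ^ 4 + 8 * f ^ 2 * y₁ ^ 2 + y₁ ^ 4 := by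
    rw [hΔ]
    exact Real.sq_sqrt (by nlinarith [pow_pos hf 4, sq_nonneg (y₁ ^ 2), sq_nonneg (f * y₁)])
  have e2 : y₂ * (8 * f ^ 2 * s - 12 * f ^ 2 + y₁ ^ 2) = 2 * (1 - s) * (4 * f * y₁ + Δ) * f := by
    rw [hy₂, div_mul_cancel₀ _ hden]
  have e3 : y₃ * (8 * f ^ 2 * s - 12 * f ^ 2 + y₁ ^ 2) = 2 * (s - 1) * f * (Δ - 4 * f * y₁) := by
    rw [hy₃, div_mul_cancel₀ _ hden]
  have hs2 : y₁ * y₂ + y₂ * y₃ + y₃ * y₁ = (4 - 8 * s) * f ^ 2 := by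
    have key : (y₁ * y₂ + y₂ * y₃ + y₃ * y₁ - (4 - 8 * s) * f ^ 2) *
        ((8 * f ^ 2 * s - 12 * f ^ 2 + y₁ ^ 2) * (8 * f ^ 2 * s - 12 * f ^ 2 + y₁ ^ 2)) = 0 := by
      linear_combination
        (y₁ * (8 * f ^ 2 * s - 12 * f ^ 2 + y₁ ^ 2) + y₃ * (8 * f ^ 2 * s - 12 * f ^ 2 + y₁ ^ 2)) * e2 +
        (y₁ * (8 * f ^ 2 * s - 12 * f ^ 2 + y₁ ^ 2) + 2 * (1 - s) * (4 * f * y₁ + Δ) * f) * e3 +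
        (-4 * (s - 1) ^ 2 * f ^ 2) * hΔ2 +
        (-4 * f ^ 2 * (y₁ ^ 2 - 4 * f ^ 2) ^ 2) * hs
    have hden2 : (8 * f ^ 2 * s - 12 * f ^ 2 + y₁ ^ 2) * (8 * f ^ 2 * s - 12 * f ^ 2 + y₁ ^ 2) ≠ 0 :=
      mul_ne_zero hden hden
    have := (mul_eq_zero.1 key).resolve_right hden2
    linarith [this]
  subst hP₁ hP₂ hP₃
  simp only at hH₁ hH₂ hndg ⊢
  have h1' : (4 * f * H.1 + y₁ ^ 2) * (y₃ ^ 2 - y₂ ^ 2) + 16 * f ^ 2 * (H.2 - y₁) * (y₂ - y₃) = 0 := by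
    have heq : (4 * f * H.1 + y₁ ^ 2) * (y₃ ^ 2 - y₂ ^ 2) + 16 * f ^ 2 * (H.2 - y₁) * (y₂ - y₃) =
        ((H.1 - -(y₁ ^ 2) / (4 * f)) * (-(y₂ ^ 2) / (4 * f) - -(y₃ ^ 2) / (4 * f)) +
          (H.2 - y₁) * (y₂ - y₃)) * (16 * f ^ 2) := by
      field_simp
      ring
    rw [heq, hH₁, zero_mul]
  have h2' : (4 * f * H.1 + y₂ ^ 2) * (y₁ ^ 2 - y₃ ^ 2) + 16 * f ^ 2 * (H.2 - y₂) * (y₃ - y₁) = 0 := by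
    have heq : (4 * f * H.1 + y₂ ^ 2) * (y₁ ^ 2 - y₃ ^ 2) + 16 * f ^ 2 * (H.2 - y₂) * (y₃ - y₁) =
        ((H.1 - -(y₂ ^ 2) / (4 * f)) * (-(y₃ ^ 2) / (4 * f) - -(y₁ ^ 2) / (4 * f)) +
          (H.2 - y₂) * (y₃ - y₁)) * (16 * f ^ 2) := by
      field_simp
      ring
    rw [heq, hH₂, zero_mul]
  have hG : (y₁ - y₂) * (y₂ - y₃) * (y₃ - y₁) ≠ 0 := by
    intro h0
    apply hndg
    have : (-(y₂ ^ 2) / (4 * f) - -(y₁ ^ 2) / (4 * f)) * (y₃ - y₁) -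
        (y₂ - y₁) * (-(y₃ ^ 2) / (4 * f) - -(y₁ ^ 2) / (4 * f)) =
        ((y₁ - y₂) * (y₂ - y₃) * (y₃ - y₁)) / (4 * f) := by
      field_simp
      ring
    rw [this, h0, zero_div]
  have key2 : 4 * f * (H.1 - (5 - 2 * s) * f) * ((y₁ - y₂) * (y₂ - y₃) * (y₃ - y₁)) = 0 := by
    linear_combination (y₃ - y₁) * h1' - (y₂ - y₃) * h2' +
      ((y₁ - y₂) * (y₂ - y₃) * (y₃ - y₁)) * hs2
  have h4f : (4 : ℝ) * f ≠ 0 := by positivity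
  have := (mul_eq_zero.1 key2).resolve_right hG
  have := (mul_eq_zero.1 this).resolve_left h4f
  linarith [this]
end

section
/- Let Q₁, Q₂, Q₃ be the polar triangle of the parabola-inscribed Poncelet triangle with respect to the parabola (vertices given by the explicit parametrization). Then each Qᵢ lies on the hyperbola (√2 + 3/2)(x − f)² − y²/2 − 2f² = 0 (in coordinates where the parabola is x = −y²/(4f) with focus at (−f,0); here the hyperbola is centered at (f, 0)). -/
/-!
Write `c = 1 + √2`, so that `c² = 3 + 2√2`; then the hyperbola is `(c (x - f))² - y² = (2f)²`.
`Q₂` is `Q₁` with `Δ` replaced by `-Δ`. Over the common denominator `d` of `Q₁`, the difference of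
squares splits as `(c²y + 2cf)(Δ - w) · (c²y - 2cf)(Δ + w)` with `w = y² - 4f²`, and
`c²(Δ² - w²) = 16f²(c²y² - 4f²)` because `c²(8√2 - 12) = -4`; as `d = 2(c²y² - 4f²)`, the product
is `(2fd)²`. For `Q₃`, `c(5 - 3√2)(1 + 2√2) = 7` simplifies the abscissa, and the equation becomes
`(c²y² + 4f²)² - (c²y² - 4f²)² = 16c²f²y²`.
-/

variable {K : Type*} [Field K] [CharZero K] {s : K}

def polarHyperbola (s f : K) : Set (K × K) :=
  {p | (s + 3 / 2) * (p.1 - f) ^ 2 - p.2 ^ 2 / 2 - 2 * f ^ 2 = 0}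

theorem div_mem_polarHyperbola_iff (hs : s ^ 2 = 2) {f a b d : K} (hd : d ≠ 0) :
    (a / d, b / d) ∈ polarHyperbola s f ↔
      ((1 + s) * (a - f * d)) ^ 2 - b ^ 2 = (2 * f * d) ^ 2 := by
  rw [polarHyperbola, Set.mem_ofPred_eq]
  constructor
  · intro h
    field_simp at h
    linear_combination h + (a - f * d) ^ 2 * hs
  · intro h
    field_simp
    linear_combination h - (a - f * d) ^ 2 * hs

def polarVertex (s f y u : K) : K × K :=
  ((1 + s) * ((4 * f * y + u) * y / (2 * (2 * s + 3) * y ^ 2 - 8 * f ^ 2)),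
    (1 + s) * (((1 + s) * y ^ 3 - 4 * (1 + s) * f ^ 2 * y - 2 * u * f) /
      (2 * (2 * s + 3) * y ^ 2 - 8 * f ^ 2)))

theorem polarVertex_mem_polarHyperbola (hs : s ^ 2 = 2) {f y u : K}
    (hu : u ^ 2 = y ^ 4 + 8 * f ^ 2 * y ^ 2 + 16 * (8 * s - 11) * f ^ 4)
    (hd : 2 * (2 * s + 3) * y ^ 2 - 8 * f ^ 2 ≠ 0) :
    polarVertex s f y u ∈ polarHyperbola s f := by
  rw [polarVertex]
  set d := 2 * (2 * s + 3) * y ^ 2 - 8 * f ^ 2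
  set k := (1 + s) ^ 2
  set w := y ^ 2 - 4 * f ^ 2
  simp only [mul_div_assoc']
  rw [div_mem_polarHyperbola_iff hs hd]
  have hd_eq : d = 2 * (k * y ^ 2 - 4 * f ^ 2) := by linear_combination (-2 * y ^ 2) * hs
  have hkey : k * (u ^ 2 - w ^ 2) = 16 * f ^ 2 * (k * y ^ 2 - 4 * f ^ 2) := by
    linear_combination k * hu + 16 * f ^ 4 * (8 * s + 4) * hs
  calc ((1 + s) * ((1 + s) * ((4 * f * y + u) * y) - f * d)) ^ 2
        - ((1 + s) * ((1 + s) * y ^ 3 - 4 * (1 + s) * f ^ 2 * y - 2 * u * f)) ^ 2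
      = (k * y + 2 * (1 + s) * f) * (u - w) * ((k * y - 2 * (1 + s) * f) * (u + w)) := by
        ring
    _ = (k * y ^ 2 - 4 * f ^ 2) * (k * (u ^ 2 - w ^ 2)) := by ring
    _ = (2 * f * d) ^ 2 := by rw [hkey, hd_eq]; ring

def thirdPolarVertex (s f y : K) : K × K :=
  ((1 + s) * ((5 - 3 * s) * ((1 + 2 * s) * y ^ 2 - 28 * f ^ 2) * f /
      (7 * ((3 + 2 * s) * y ^ 2 - 4 * f ^ 2))),
    (1 + s) * (-(8 * f ^ 2 * y) / ((3 + 2 * s) * y ^ 2 - 4 * f ^ 2)))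

theorem thirdPolarVertex_mem_polarHyperbola (hs : s ^ 2 = 2) {f y : K}
    (he : (3 + 2 * s) * y ^ 2 - 4 * f ^ 2 ≠ 0) :
    thirdPolarVertex s f y ∈ polarHyperbola s f := by
  rw [thirdPolarVertex]
  set e := (3 + 2 * s) * y ^ 2 - 4 * f ^ 2
  have hx : (1 + s) * ((5 - 3 * s) * ((1 + 2 * s) * y ^ 2 - 28 * f ^ 2) * f / (7 * e)) =
      f * (y ^ 2 - 4 * (2 * s - 1) * f ^ 2) / e := by
    field_simp
    linear_combination ((1 - 6 * s) * f * y ^ 2 + 84 * f ^ 3) * hs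
  rw [hx, mul_div_assoc', div_mem_polarHyperbola_iff hs he]
  have he_eq : e = (1 + s) ^ 2 * y ^ 2 - 4 * f ^ 2 := by linear_combination -y ^ 2 * hs
  have hP : (1 + s) * (f * (y ^ 2 - 4 * (2 * s - 1) * f ^ 2) - f * e) =
      -2 * f * ((1 + s) ^ 2 * y ^ 2 + 4 * f ^ 2) := by
    linear_combination -8 * f ^ 3 * hs
  rw [hP, he_eq]
  ring

theorem polar_triangle_on_hyperbola_general (f y₁ Δ : ℝ)
    (hΔ : Δ = Real.sqrt (y₁ ^ 4 + 8 * f ^ 2 * y₁ ^ 2 + 16 * (8 * Real.sqrt 2 - 11) * f ^ 4))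
    (hden₁ : 2 * (2 * Real.sqrt 2 + 3) * y₁ ^ 2 - 8 * f ^ 2 ≠ 0)
    (hden₃ : (3 + 2 * Real.sqrt 2) * y₁ ^ 2 - 4 * f ^ 2 ≠ 0)
    (Q₁ Q₂ Q₃ : ℝ × ℝ)
    (hQ₁ : Q₁ = ((1 + Real.sqrt 2) * ((4 * f * y₁ + Δ) * y₁ /
        (2 * (2 * Real.sqrt 2 + 3) * y₁ ^ 2 - 8 * f ^ 2)),
      (1 + Real.sqrt 2) * (((1 + Real.sqrt 2) * y₁ ^ 3 - 4 * (1 + Real.sqrt 2) * f ^ 2 * y₁ -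
        2 * Δ * f) / (2 * (2 * Real.sqrt 2 + 3) * y₁ ^ 2 - 8 * f ^ 2))))
    (hQ₂ : Q₂ = ((1 + Real.sqrt 2) * ((4 * f * y₁ - Δ) * y₁ /
        (2 * (2 * Real.sqrt 2 + 3) * y₁ ^ 2 - 8 * f ^ 2)),
      (1 + Real.sqrt 2) * (((1 + Real.sqrt 2) * y₁ ^ 3 - 4 * (1 + Real.sqrt 2) * f ^ 2 * y₁ +
        2 * Δ * f) / (2 * (2 * Real.sqrt 2 + 3) * y₁ ^ 2 - 8 * f ^ 2))))
    (hQ₃ : Q₃ = ((1 + Real.sqrt 2) * ((5 - 3 * Real.sqrt 2) *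
        ((1 + 2 * Real.sqrt 2) * y₁ ^ 2 - 28 * f ^ 2) * f /
        (7 * ((3 + 2 * Real.sqrt 2) * y₁ ^ 2 - 4 * f ^ 2))),
      (1 + Real.sqrt 2) * (-(8 * f ^ 2 * y₁) /
        ((3 + 2 * Real.sqrt 2) * y₁ ^ 2 - 4 * f ^ 2)))) :
    ((Real.sqrt 2 + 3 / 2) * (Q₁.1 - f) ^ 2 - Q₁.2 ^ 2 / 2 - 2 * f ^ 2 = 0) ∧
    ((Real.sqrt 2 + 3 / 2) * (Q₂.1 - f) ^ 2 - Q₂.2 ^ 2 / 2 - 2 * f ^ 2 = 0) ∧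
    ((Real.sqrt 2 + 3 / 2) * (Q₃.1 - f) ^ 2 - Q₃.2 ^ 2 / 2 - 2 * f ^ 2 = 0) := by
  have hs : √2 ^ 2 = 2 := Real.sq_sqrt zero_le_two
  have hΔ_sq : Δ ^ 2 = y₁ ^ 4 + 8 * f ^ 2 * y₁ ^ 2 + 16 * (8 * √2 - 11) * f ^ 4 := by
    have h_coeff : 0 ≤ 8 * √2 - 11 := by nlinarith [Real.sqrt_nonneg 2]
    rw [hΔ, Real.sq_sqrt (by positivity)]
  refine ⟨?_, ?_, ?_⟩
  · rw [hQ₁]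
    exact polarVertex_mem_polarHyperbola hs hΔ_sq hden₁
  · have hQ₂_eq : Q₂ = polarVertex √2 f y₁ (-Δ) := by
      rw [hQ₂, polarVertex]
      ext <;> ring
    rw [hQ₂_eq]
    exact polarVertex_mem_polarHyperbola hs (by rw [neg_sq, hΔ_sq]) hden₁
  · rw [hQ₃]
    exact thirdPolarVertex_mem_polarHyperbola hs hden₃

/-- The polar triangle `Q₁Q₂Q₃` of the parabola-inscribed Poncelet triangle (with respect to
the parabola `x = −y²/(4f)`, focus `(−f,0)`) has all vertices on the hyperbola
`(√2 + 3/2)(x − f)² − y²/2 − 2f² = 0`, centered at `(f, 0)`. -/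
theorem polar_triangle_on_hyperbola (f y₁ Δ : ℝ) (hf : 0 < f)
    (hΔ : Δ = Real.sqrt (y₁ ^ 4 + 8 * f ^ 2 * y₁ ^ 2 + 16 * (8 * Real.sqrt 2 - 11) * f ^ 4))
    (hden₁ : 2 * (2 * Real.sqrt 2 + 3) * y₁ ^ 2 - 8 * f ^ 2 ≠ 0)
    (hden₃ : (3 + 2 * Real.sqrt 2) * y₁ ^ 2 - 4 * f ^ 2 ≠ 0)
    (Q₁ Q₂ Q₃ : ℝ × ℝ)
    (hQ₁ : Q₁ = ((1 + Real.sqrt 2) * ((4 * f * y₁ + Δ) * y₁ /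
        (2 * (2 * Real.sqrt 2 + 3) * y₁ ^ 2 - 8 * f ^ 2)),
      (1 + Real.sqrt 2) * (((1 + Real.sqrt 2) * y₁ ^ 3 - 4 * (1 + Real.sqrt 2) * f ^ 2 * y₁ -
        2 * Δ * f) / (2 * (2 * Real.sqrt 2 + 3) * y₁ ^ 2 - 8 * f ^ 2))))
    (hQ₂ : Q₂ = ((1 + Real.sqrt 2) * ((4 * f * y₁ - Δ) * y₁ /
        (2 * (2 * Real.sqrt 2 + 3) * y₁ ^ 2 - 8 * f ^ 2)),
      (1 + Real.sqrt 2) * (((1 + Real.sqrt 2) * y₁ ^ 3 - 4 * (1 + Real.sqrt 2) * f ^ 2 * y₁ +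
        2 * Δ * f) / (2 * (2 * Real.sqrt 2 + 3) * y₁ ^ 2 - 8 * f ^ 2))))
    (hQ₃ : Q₃ = ((1 + Real.sqrt 2) * ((5 - 3 * Real.sqrt 2) *
        ((1 + 2 * Real.sqrt 2) * y₁ ^ 2 - 28 * f ^ 2) * f /
        (7 * ((3 + 2 * Real.sqrt 2) * y₁ ^ 2 - 4 * f ^ 2))),
      (1 + Real.sqrt 2) * (-(8 * f ^ 2 * y₁) /
        ((3 + 2 * Real.sqrt 2) * y₁ ^ 2 - 4 * f ^ 2)))) :
    ((Real.sqrt 2 + 3 / 2) * (Q₁.1 - f) ^ 2 - Q₁.2 ^ 2 / 2 - 2 * f ^ 2 = 0) ∧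
    ((Real.sqrt 2 + 3 / 2) * (Q₂.1 - f) ^ 2 - Q₂.2 ^ 2 / 2 - 2 * f ^ 2 = 0) ∧
    ((Real.sqrt 2 + 3 / 2) * (Q₃.1 - f) ^ 2 - Q₃.2 ^ 2 / 2 - 2 * f ^ 2 = 0) :=
  polar_triangle_on_hyperbola_general f y₁ Δ hΔ hden₁ hden₃ Q₁ Q₂ Q₃ hQ₁ hQ₂ hQ₃
end

section
/- Over the polar triangle family Q₁Q₂Q₃ (polar of parabola-inscribed Poncelet triangles with respect to the parabola), the barycenter (Q₁+Q₂+Q₃)/3 has constant x-coordinate equal to (2√2 − 1)f/3; that is, the barycenter sweeps a line parallel to the directrix. -/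
/-! The square root `Δ` enters `Q₁` and `Q₂` with opposite signs, so it cancels from the sum of
their abscissae, and the denominator of `Q₁, Q₂` is twice that of `Q₃`. Over the common
denominator `(3 + 2√2) y₁² − 4f²` the numerator, once reduced by `√2 ^ 2 = 2`, is exactly
`(2√2 − 1) f` times that denominator. -/

theorem polar_abscissa_sum {K : Type*} [Field K] [CharZero K] {s : K} (hs : s ^ 2 = 2)
    (f y Δ : K) (hE : (3 + 2 * s) * y ^ 2 - 4 * f ^ 2 ≠ 0) :
    (1 + s) * ((4 * f * y + Δ) * y / (2 * (2 * s + 3) * y ^ 2 - 8 * f ^ 2)) +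
      (1 + s) * ((4 * f * y - Δ) * y / (2 * (2 * s + 3) * y ^ 2 - 8 * f ^ 2)) +
      (1 + s) * ((5 - 3 * s) * ((1 + 2 * s) * y ^ 2 - 28 * f ^ 2) * f /
        (7 * ((3 + 2 * s) * y ^ 2 - 4 * f ^ 2))) = (2 * s - 1) * f := by
  set E := (3 + 2 * s) * y ^ 2 - 4 * f ^ 2
  have hD : 2 * (2 * s + 3) * y ^ 2 - 8 * f ^ 2 = 2 * E := by ring
  have hnum₃ : (5 - 3 * s) * ((1 + 2 * s) * y ^ 2 - 28 * f ^ 2) =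
      7 * ((s - 1) * y ^ 2 - 4 * (5 - 3 * s) * f ^ 2) := by
    linear_combination (-6 * y ^ 2) * hs
  have hnum : (1 + s) * ((3 + s) * y ^ 2 - 4 * (5 - 3 * s) * f ^ 2) = (2 * s - 1) * E := by
    linear_combination (-3 * y ^ 2 + 12 * f ^ 2) * hs
  calc _ = (1 + s) * ((3 + s) * y ^ 2 - 4 * (5 - 3 * s) * f ^ 2) * f / E := by
        rw [hD, hnum₃]; field_simp; ring
    _ = (2 * s - 1) * f := by rw [hnum]; field_simp

theorem polar_barycenter_line_general (f y₁ Δ : ℝ) (Q₁ Q₂ Q₃ : ℝ × ℝ)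
    (hden₃ : (3 + 2 * Real.sqrt 2) * y₁ ^ 2 - 4 * f ^ 2 ≠ 0)
    (hQ₁ : Q₁ = ((1 + Real.sqrt 2) * ((4 * f * y₁ + Δ) * y₁ /
        (2 * (2 * Real.sqrt 2 + 3) * y₁ ^ 2 - 8 * f ^ 2)),
      (1 + Real.sqrt 2) * (((1 + Real.sqrt 2) * y₁ ^ 3 - 4 * (1 + Real.sqrt 2) * f ^ 2 * y₁ -
        2 * Δ * f) / (2 * (2 * Real.sqrt 2 + 3) * y₁ ^ 2 - 8 * f ^ 2))))
    (hQ₂ : Q₂ = ((1 + Real.sqrt 2) * ((4 * f * y₁ - Δ) * y₁ /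
        (2 * (2 * Real.sqrt 2 + 3) * y₁ ^ 2 - 8 * f ^ 2)),
      (1 + Real.sqrt 2) * (((1 + Real.sqrt 2) * y₁ ^ 3 - 4 * (1 + Real.sqrt 2) * f ^ 2 * y₁ +
        2 * Δ * f) / (2 * (2 * Real.sqrt 2 + 3) * y₁ ^ 2 - 8 * f ^ 2))))
    (hQ₃ : Q₃ = ((1 + Real.sqrt 2) * ((5 - 3 * Real.sqrt 2) *
        ((1 + 2 * Real.sqrt 2) * y₁ ^ 2 - 28 * f ^ 2) * f /
        (7 * ((3 + 2 * Real.sqrt 2) * y₁ ^ 2 - 4 * f ^ 2))),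
      (1 + Real.sqrt 2) * (-(8 * f ^ 2 * y₁) /
        ((3 + 2 * Real.sqrt 2) * y₁ ^ 2 - 4 * f ^ 2)))) :
    (Q₁.1 + Q₂.1 + Q₃.1) / 3 = (2 * Real.sqrt 2 - 1) * f / 3 := by
  subst hQ₁ hQ₂ hQ₃
  rw [polar_abscissa_sum (Real.sq_sqrt zero_le_two) f y₁ Δ hden₃]

/-- Over the polar triangle family `Q₁Q₂Q₃`, the barycenter has constant abscissa
`(2√2 − 1)f/3`: it sweeps a line parallel to the directrix. -/
theorem polar_barycenter_line (f y₁ Δ : ℝ) (hf : 0 < f) (Q₁ Q₂ Q₃ : ℝ × ℝ)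
    (hΔ : Δ = Real.sqrt (y₁ ^ 4 + 8 * f ^ 2 * y₁ ^ 2 + 16 * (8 * Real.sqrt 2 - 11) * f ^ 4))
    (hden₁ : 2 * (2 * Real.sqrt 2 + 3) * y₁ ^ 2 - 8 * f ^ 2 ≠ 0)
    (hden₃ : (3 + 2 * Real.sqrt 2) * y₁ ^ 2 - 4 * f ^ 2 ≠ 0)
    (hQ₁ : Q₁ = ((1 + Real.sqrt 2) * ((4 * f * y₁ + Δ) * y₁ /
        (2 * (2 * Real.sqrt 2 + 3) * y₁ ^ 2 - 8 * f ^ 2)),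
      (1 + Real.sqrt 2) * (((1 + Real.sqrt 2) * y₁ ^ 3 - 4 * (1 + Real.sqrt 2) * f ^ 2 * y₁ -
        2 * Δ * f) / (2 * (2 * Real.sqrt 2 + 3) * y₁ ^ 2 - 8 * f ^ 2))))
    (hQ₂ : Q₂ = ((1 + Real.sqrt 2) * ((4 * f * y₁ - Δ) * y₁ /
        (2 * (2 * Real.sqrt 2 + 3) * y₁ ^ 2 - 8 * f ^ 2)),
      (1 + Real.sqrt 2) * (((1 + Real.sqrt 2) * y₁ ^ 3 - 4 * (1 + Real.sqrt 2) * f ^ 2 * y₁ +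
        2 * Δ * f) / (2 * (2 * Real.sqrt 2 + 3) * y₁ ^ 2 - 8 * f ^ 2))))
    (hQ₃ : Q₃ = ((1 + Real.sqrt 2) * ((5 - 3 * Real.sqrt 2) *
        ((1 + 2 * Real.sqrt 2) * y₁ ^ 2 - 28 * f ^ 2) * f /
        (7 * ((3 + 2 * Real.sqrt 2) * y₁ ^ 2 - 4 * f ^ 2))),
      (1 + Real.sqrt 2) * (-(8 * f ^ 2 * y₁) /
        ((3 + 2 * Real.sqrt 2) * y₁ ^ 2 - 4 * f ^ 2)))) :
    (Q₁.1 + Q₂.1 + Q₃.1) / 3 = (2 * Real.sqrt 2 - 1) * f / 3 :=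
  polar_barycenter_line_general f y₁ Δ Q₁ Q₂ Q₃ hden₃ hQ₁ hQ₂ hQ₃
end

section
/- Over the polar triangle family Q₁Q₂Q₃, the line through the barycenter G' = (Q₁+Q₂+Q₃)/3 and the circumcenter O' (the Euler line) passes through the point F = (−f, 0), the focus of the original parabola: i.e., F, G', O' are collinear for every admissible y₁. -/
/-!
`Q₁, Q₂ = A ± Δ • B` for a point `A` and a vector `B` depending only on `y₁` and `f`, so the
circumcenter sees `Δ` only through `Δ²`, a polynomial in `y₁` and `f`. It is therefore the rational
point `circumcenter f y₁` below, of abscissa `(√2 - 1) f`, and the centroid has abscissa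
`(2√2 - 1) f / 3`; collinearity with `F` is then an identity in `ℚ(√2)(y₁, f)`. The circumcenter is
unique because the triangle is nondegenerate: up to a positive factor, its signed area is `-Δ`
times a binary quartic form in `y₁, f` whose coefficients are all negative.
-/

noncomputable section

namespace PolarTriangle

def sqDist (p q : ℝ × ℝ) : ℝ := (p.1 - q.1) ^ 2 + (p.2 - q.2) ^ 2

def cross (u v : ℝ × ℝ) : ℝ := u.1 * v.2 - u.2 * v.1

def centroid (P₁ P₂ P₃ : ℝ × ℝ) : ℝ × ℝ :=
  ((P₁.1 + P₂.1 + P₃.1) / 3, (P₁.2 + P₂.2 + P₃.2) / 3)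

theorem eq_of_equidistant_of_cross_ne_zero {P₁ P₂ P₃ O O' : ℝ × ℝ}
    (hP : cross (P₂ - P₁) (P₃ - P₁) ≠ 0)
    (h₂ : sqDist O P₁ = sqDist O P₂) (h₃ : sqDist O P₁ = sqDist O P₃)
    (h₂' : sqDist O' P₁ = sqDist O' P₂) (h₃' : sqDist O' P₁ = sqDist O' P₃) : O = O' := by
  simp only [sqDist] at h₂ h₃ h₂' h₃'
  simp only [cross, Prod.fst_sub, Prod.snd_sub] at hP
  have hx : (O.1 - O'.1) * ((P₂.1 - P₁.1) * (P₃.2 - P₁.2) - (P₂.2 - P₁.2) * (P₃.1 - P₁.1)) = 0 := by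
    linear_combination (P₃.2 - P₁.2) / 2 * (h₂ - h₂') - (P₂.2 - P₁.2) / 2 * (h₃ - h₃')
  have hy : (O.2 - O'.2) * ((P₂.1 - P₁.1) * (P₃.2 - P₁.2) - (P₂.2 - P₁.2) * (P₃.1 - P₁.1)) = 0 := by
    linear_combination (P₂.1 - P₁.1) / 2 * (h₃ - h₃') - (P₃.1 - P₁.1) / 2 * (h₂ - h₂')
  exact Prod.ext (sub_eq_zero.1 ((mul_eq_zero.1 hx).resolve_right hP))
    (sub_eq_zero.1 ((mul_eq_zero.1 hy).resolve_right hP))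

variable (f y₁ Δ : ℝ)

def vertex₁ : ℝ × ℝ :=
  ((1 + √2) * ((4 * f * y₁ + Δ) * y₁ / (2 * (2 * √2 + 3) * y₁ ^ 2 - 8 * f ^ 2)),
    (1 + √2) * (((1 + √2) * y₁ ^ 3 - 4 * (1 + √2) * f ^ 2 * y₁ - 2 * Δ * f) /
      (2 * (2 * √2 + 3) * y₁ ^ 2 - 8 * f ^ 2)))

def vertex₂ : ℝ × ℝ :=
  ((1 + √2) * ((4 * f * y₁ - Δ) * y₁ / (2 * (2 * √2 + 3) * y₁ ^ 2 - 8 * f ^ 2)),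
    (1 + √2) * (((1 + √2) * y₁ ^ 3 - 4 * (1 + √2) * f ^ 2 * y₁ + 2 * Δ * f) /
      (2 * (2 * √2 + 3) * y₁ ^ 2 - 8 * f ^ 2)))

def vertex₃ : ℝ × ℝ :=
  ((1 + √2) * ((5 - 3 * √2) * ((1 + 2 * √2) * y₁ ^ 2 - 28 * f ^ 2) * f /
      (7 * ((3 + 2 * √2) * y₁ ^ 2 - 4 * f ^ 2))),
    (1 + √2) * (-(8 * f ^ 2 * y₁) / ((3 + 2 * √2) * y₁ ^ 2 - 4 * f ^ 2)))

def circumcenter : ℝ × ℝ :=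
  ((√2 - 1) * f, y₁ * ((2 + √2) * y₁ ^ 2 - (8 + 12 * √2) * f ^ 2) /
    (2 * ((3 + 2 * √2) * y₁ ^ 2 - 4 * f ^ 2)))

variable {f y₁ Δ}

theorem radicand_pos (hf : 0 < f) (y₁ : ℝ) :
    0 < y₁ ^ 4 + 8 * f ^ 2 * y₁ ^ 2 + 16 * (8 * √2 - 11) * f ^ 4 := by
  have h : 11 / 8 < √2 := by rw [Real.lt_sqrt (by norm_num)]; norm_num
  have : 0 < 16 * (8 * √2 - 11) * f ^ 4 := mul_pos (by linarith) (by positivity)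
  have : 0 ≤ y₁ ^ 4 + 8 * f ^ 2 * y₁ ^ 2 := by positivity
  linarith

theorem quartic_neg (hf : 0 < f) (y₁ : ℝ) :
    (1 - √2) * y₁ ^ 4 + (72 * √2 - 104) * f ^ 2 * y₁ ^ 2 + (304 * √2 - 432) * f ^ 4 < 0 := by
  have hlo : 1 < √2 := by rw [Real.lt_sqrt (by norm_num)]; norm_num
  have hhi : √2 < 17 / 12 := by rw [Real.sqrt_lt' (by norm_num)]; norm_num
  have : (1 - √2) * y₁ ^ 4 ≤ 0 := mul_nonpos_of_nonpos_of_nonneg (by linarith) (by positivity)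
  have : (72 * √2 - 104) * f ^ 2 * y₁ ^ 2 ≤ 0 :=
    mul_nonpos_of_nonpos_of_nonneg (mul_nonpos_of_nonpos_of_nonneg (by linarith) (by positivity))
      (by positivity)
  have : (304 * √2 - 432) * f ^ 4 < 0 := mul_neg_of_neg_of_pos (by linarith) (by positivity)
  linarith

theorem cross_vertices_ne_zero (hf : 0 < f) (hΔ : 0 < Δ)
    (he : (3 + 2 * √2) * y₁ ^ 2 - 4 * f ^ 2 ≠ 0) :
    cross (vertex₂ f y₁ Δ - vertex₁ f y₁ Δ) (vertex₃ f y₁ - vertex₁ f y₁ Δ) ≠ 0 := by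
  have hs : √2 ^ 2 = 2 := Real.sq_sqrt zero_le_two
  set N := (1 - √2) * y₁ ^ 4 + (72 * √2 - 104) * f ^ 2 * y₁ ^ 2 + (304 * √2 - 432) * f ^ 4
    with hN_def
  have hcross : cross (vertex₂ f y₁ Δ - vertex₁ f y₁ Δ) (vertex₃ f y₁ - vertex₁ f y₁ Δ) =
      -(Δ * (3 + 2 * √2) ^ 2 * N) / (2 * ((3 + 2 * √2) * y₁ ^ 2 - 4 * f ^ 2) ^ 2) := by
    simp only [cross, vertex₁, vertex₂, vertex₃, Prod.fst_sub, Prod.snd_sub]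
    rw [show 2 * (2 * √2 + 3) * y₁ ^ 2 - 8 * f ^ 2 = 2 * ((3 + 2 * √2) * y₁ ^ 2 - 4 * f ^ 2) by
      ring]
    set e := (3 + 2 * √2) * y₁ ^ 2 - 4 * f ^ 2 with he_def
    field_simp
    grind
  have hpos : 0 < Δ * (3 + 2 * √2) ^ 2 * -N :=
    mul_pos (by positivity) (by linarith [quartic_neg hf y₁])
  rw [hcross]
  exact div_ne_zero (by linarith) (by positivity)

theorem sqDist_circumcenter_vertex₁_eq_vertex₂ (he : (3 + 2 * √2) * y₁ ^ 2 - 4 * f ^ 2 ≠ 0) :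
    sqDist (circumcenter f y₁) (vertex₁ f y₁ Δ) = sqDist (circumcenter f y₁) (vertex₂ f y₁ Δ) := by
  have hs : √2 ^ 2 = 2 := Real.sq_sqrt zero_le_two
  simp only [sqDist, circumcenter, vertex₁, vertex₂]
  rw [show 2 * (2 * √2 + 3) * y₁ ^ 2 - 8 * f ^ 2 = 2 * ((3 + 2 * √2) * y₁ ^ 2 - 4 * f ^ 2) by
    ring]
  set e := (3 + 2 * √2) * y₁ ^ 2 - 4 * f ^ 2 with he_def
  field_simp
  grind

theorem sqDist_circumcenter_vertex₁_eq_vertex₃ (he : (3 + 2 * √2) * y₁ ^ 2 - 4 * f ^ 2 ≠ 0)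
    (hΔ : Δ ^ 2 = y₁ ^ 4 + 8 * f ^ 2 * y₁ ^ 2 + 16 * (8 * √2 - 11) * f ^ 4) :
    sqDist (circumcenter f y₁) (vertex₁ f y₁ Δ) = sqDist (circumcenter f y₁) (vertex₃ f y₁) := by
  have hs : √2 ^ 2 = 2 := Real.sq_sqrt zero_le_two
  simp only [sqDist, circumcenter, vertex₁, vertex₃]
  rw [show 2 * (2 * √2 + 3) * y₁ ^ 2 - 8 * f ^ 2 = 2 * ((3 + 2 * √2) * y₁ ^ 2 - 4 * f ^ 2) by
    ring]
  set e := (3 + 2 * √2) * y₁ ^ 2 - 4 * f ^ 2 with he_def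
  field_simp
  grind

theorem cross_centroid_circumcenter_eq_zero (he : (3 + 2 * √2) * y₁ ^ 2 - 4 * f ^ 2 ≠ 0) :
    cross (centroid (vertex₁ f y₁ Δ) (vertex₂ f y₁ Δ) (vertex₃ f y₁) - (-f, 0))
      (circumcenter f y₁ - (-f, 0)) = 0 := by
  have hs : √2 ^ 2 = 2 := Real.sq_sqrt zero_le_two
  simp only [cross, centroid, circumcenter, vertex₁, vertex₂, vertex₃, Prod.fst_sub, Prod.snd_sub]
  rw [show 2 * (2 * √2 + 3) * y₁ ^ 2 - 8 * f ^ 2 = 2 * ((3 + 2 * √2) * y₁ ^ 2 - 4 * f ^ 2) by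
    ring]
  set e := (3 + 2 * √2) * y₁ ^ 2 - 4 * f ^ 2 with he_def
  field_simp
  grind

end PolarTriangle

end

theorem polar_euler_line_through_focus_general (f y₁ Δ : ℝ) (hf : 0 < f) (Q₁ Q₂ Q₃ O G : ℝ × ℝ)
    (hΔ : Δ = Real.sqrt (y₁ ^ 4 + 8 * f ^ 2 * y₁ ^ 2 + 16 * (8 * Real.sqrt 2 - 11) * f ^ 4))
    (hden₃ : (3 + 2 * Real.sqrt 2) * y₁ ^ 2 - 4 * f ^ 2 ≠ 0)
    (hQ₁ : Q₁ = ((1 + Real.sqrt 2) * ((4 * f * y₁ + Δ) * y₁ /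
        (2 * (2 * Real.sqrt 2 + 3) * y₁ ^ 2 - 8 * f ^ 2)),
      (1 + Real.sqrt 2) * (((1 + Real.sqrt 2) * y₁ ^ 3 - 4 * (1 + Real.sqrt 2) * f ^ 2 * y₁ -
        2 * Δ * f) / (2 * (2 * Real.sqrt 2 + 3) * y₁ ^ 2 - 8 * f ^ 2))))
    (hQ₂ : Q₂ = ((1 + Real.sqrt 2) * ((4 * f * y₁ - Δ) * y₁ /
        (2 * (2 * Real.sqrt 2 + 3) * y₁ ^ 2 - 8 * f ^ 2)),
      (1 + Real.sqrt 2) * (((1 + Real.sqrt 2) * y₁ ^ 3 - 4 * (1 + Real.sqrt 2) * f ^ 2 * y₁ +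
        2 * Δ * f) / (2 * (2 * Real.sqrt 2 + 3) * y₁ ^ 2 - 8 * f ^ 2))))
    (hQ₃ : Q₃ = ((1 + Real.sqrt 2) * ((5 - 3 * Real.sqrt 2) *
        ((1 + 2 * Real.sqrt 2) * y₁ ^ 2 - 28 * f ^ 2) * f /
        (7 * ((3 + 2 * Real.sqrt 2) * y₁ ^ 2 - 4 * f ^ 2))),
      (1 + Real.sqrt 2) * (-(8 * f ^ 2 * y₁) /
        ((3 + 2 * Real.sqrt 2) * y₁ ^ 2 - 4 * f ^ 2))))
    (hO₁ : (O.1 - Q₁.1) ^ 2 + (O.2 - Q₁.2) ^ 2 = (O.1 - Q₂.1) ^ 2 + (O.2 - Q₂.2) ^ 2)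
    (hO₂ : (O.1 - Q₁.1) ^ 2 + (O.2 - Q₁.2) ^ 2 = (O.1 - Q₃.1) ^ 2 + (O.2 - Q₃.2) ^ 2)
    (hG : G = (((Q₁.1 + Q₂.1 + Q₃.1) / 3 : ℝ), ((Q₁.2 + Q₂.2 + Q₃.2) / 3 : ℝ))) :
    (G.1 - (-f)) * (O.2 - 0) - (G.2 - 0) * (O.1 - (-f)) = 0 := by
  open PolarTriangle in
  have hrad := radicand_pos hf y₁
  have hΔpos : 0 < Δ := hΔ ▸ Real.sqrt_pos.2 hrad
  have hΔsq : Δ ^ 2 = y₁ ^ 4 + 8 * f ^ 2 * y₁ ^ 2 + 16 * (8 * √2 - 11) * f ^ 4 :=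
    hΔ ▸ Real.sq_sqrt hrad.le
  subst hQ₁ hQ₂ hQ₃ hG
  obtain rfl : O = circumcenter f y₁ :=
    eq_of_equidistant_of_cross_ne_zero (cross_vertices_ne_zero hf hΔpos hden₃) hO₁ hO₂
      (sqDist_circumcenter_vertex₁_eq_vertex₂ hden₃)
      (sqDist_circumcenter_vertex₁_eq_vertex₃ hden₃ hΔsq)
  exact cross_centroid_circumcenter_eq_zero hden₃

/-- Over the polar triangle family `Q₁Q₂Q₃`, the Euler line (through the barycenter `G`
and the circumcenter `O`) passes through the focus `F = (−f, 0)` of the parabola: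
`F`, `G`, `O` are collinear. -/
theorem polar_euler_line_through_focus (f y₁ Δ : ℝ) (hf : 0 < f) (Q₁ Q₂ Q₃ O G : ℝ × ℝ)
    (hΔ : Δ = Real.sqrt (y₁ ^ 4 + 8 * f ^ 2 * y₁ ^ 2 + 16 * (8 * Real.sqrt 2 - 11) * f ^ 4))
    (hden₁ : 2 * (2 * Real.sqrt 2 + 3) * y₁ ^ 2 - 8 * f ^ 2 ≠ 0)
    (hden₃ : (3 + 2 * Real.sqrt 2) * y₁ ^ 2 - 4 * f ^ 2 ≠ 0)
    (hQ₁ : Q₁ = ((1 + Real.sqrt 2) * ((4 * f * y₁ + Δ) * y₁ /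
        (2 * (2 * Real.sqrt 2 + 3) * y₁ ^ 2 - 8 * f ^ 2)),
      (1 + Real.sqrt 2) * (((1 + Real.sqrt 2) * y₁ ^ 3 - 4 * (1 + Real.sqrt 2) * f ^ 2 * y₁ -
        2 * Δ * f) / (2 * (2 * Real.sqrt 2 + 3) * y₁ ^ 2 - 8 * f ^ 2))))
    (hQ₂ : Q₂ = ((1 + Real.sqrt 2) * ((4 * f * y₁ - Δ) * y₁ /
        (2 * (2 * Real.sqrt 2 + 3) * y₁ ^ 2 - 8 * f ^ 2)),
      (1 + Real.sqrt 2) * (((1 + Real.sqrt 2) * y₁ ^ 3 - 4 * (1 + Real.sqrt 2) * f ^ 2 * y₁ +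
        2 * Δ * f) / (2 * (2 * Real.sqrt 2 + 3) * y₁ ^ 2 - 8 * f ^ 2))))
    (hQ₃ : Q₃ = ((1 + Real.sqrt 2) * ((5 - 3 * Real.sqrt 2) *
        ((1 + 2 * Real.sqrt 2) * y₁ ^ 2 - 28 * f ^ 2) * f /
        (7 * ((3 + 2 * Real.sqrt 2) * y₁ ^ 2 - 4 * f ^ 2))),
      (1 + Real.sqrt 2) * (-(8 * f ^ 2 * y₁) /
        ((3 + 2 * Real.sqrt 2) * y₁ ^ 2 - 4 * f ^ 2))))
    (hO₁ : (O.1 - Q₁.1) ^ 2 + (O.2 - Q₁.2) ^ 2 = (O.1 - Q₂.1) ^ 2 + (O.2 - Q₂.2) ^ 2)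
    (hO₂ : (O.1 - Q₁.1) ^ 2 + (O.2 - Q₁.2) ^ 2 = (O.1 - Q₃.1) ^ 2 + (O.2 - Q₃.2) ^ 2)
    (hG : G = (((Q₁.1 + Q₂.1 + Q₃.1) / 3 : ℝ), ((Q₁.2 + Q₂.2 + Q₃.2) / 3 : ℝ))) :
    (G.1 - (-f)) * (O.2 - 0) - (G.2 - 0) * (O.1 - (-f)) = 0 :=
  polar_euler_line_through_focus_general f y₁ Δ hf Q₁ Q₂ Q₃ O G hΔ hden₃ hQ₁ hQ₂ hQ₃ hO₁ hO₂ hG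
end

section
/- Over the polar triangle family, the circumcircle of Q₁Q₂Q₃ passes through the focus F = (−f, 0) of the parabola: |O' − F| = |O' − Q₁| where O' is the circumcenter. -/
/-!
Set `F = (-f, 0)`. The tangents to `x = -y² / (4f)` at the points with ordinates `a` and `b` meet
at `(-ab / (4f), (a + b) / 2)`. For three distinct ordinates the perpendicular bisectors of the
three meeting points are lines with slopes `a / (2f)`, so they meet in a single explicit point.
That point is at the same squared distance from `F` as from the meeting points; this is a
polynomial identity. The given `Q₁, Q₂, Q₃` are the meeting points for the ordinates `y₁`, `y₂`,
`y₃`. These ordinates are distinct: `y₂ - y₃` is a nonzero multiple of `Δ`, and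
`(y₁ - y₂)(y₁ - y₃)` is a positive quartic divided by `(1 + √2)((3 + 2√2) y₁² - 4f²)`.
-/

open Real

noncomputable section

def sqDist (P Q : ℝ × ℝ) : ℝ := (P.1 - Q.1) ^ 2 + (P.2 - Q.2) ^ 2

/-- The meeting point of the tangents to `x = -y² / (4f)` at the points with ordinates `a`, `b`. -/
def tangentMeet (f a b : ℝ) : ℝ × ℝ := (-(a * b) / (4 * f), (a + b) / 2)

def tangentCircumcenter (f a b c : ℝ) : ℝ × ℝ :=
  (-f / 2 - (a * b + b * c + c * a) / (8 * f), (a + b + c) / 4 - a * b * c / (16 * f ^ 2))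

theorem sqDist_eq_sqDist_iff (O P Q : ℝ × ℝ) :
    sqDist O P = sqDist O Q ↔
      2 * (O.1 * (P.1 - Q.1) + O.2 * (P.2 - Q.2)) = P.1 ^ 2 + P.2 ^ 2 - (Q.1 ^ 2 + Q.2 ^ 2) := by
  unfold sqDist
  constructor <;> intro h <;> linear_combination -h

theorem tangentMeet_comm (f a b : ℝ) : tangentMeet f a b = tangentMeet f b a := by
  rw [tangentMeet, tangentMeet, mul_comm, add_comm]

theorem sqDist_tangentCircumcenter_focus {f : ℝ} (hf : f ≠ 0) (a b c : ℝ) :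
    sqDist (tangentCircumcenter f a b c) (-f, 0) =
      sqDist (tangentCircumcenter f a b c) (tangentMeet f a b) := by
  unfold sqDist tangentCircumcenter tangentMeet
  field_simp
  ring

theorem tangentMeet_bisector {f a b c : ℝ} (hf : f ≠ 0) (hbc : b ≠ c) {O : ℝ × ℝ}
    (h : sqDist O (tangentMeet f a b) = sqDist O (tangentMeet f a c)) :
    8 * f * a * O.1 - 16 * f ^ 2 * O.2 + a ^ 2 * (b + c) + 4 * f ^ 2 * (2 * a + b + c) = 0 := by
  rw [sqDist_eq_sqDist_iff] at h
  unfold tangentMeet at h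
  field_simp at h
  refine (mul_eq_zero.mp ?_).resolve_left (sub_ne_zero.mpr hbc)
  linear_combination (-1 / 4 : ℝ) * h

theorem eq_tangentCircumcenter {f a b c : ℝ} (hf : f ≠ 0) (hab : a ≠ b) (hac : a ≠ c)
    (hbc : b ≠ c) {O : ℝ × ℝ}
    (h₁ : sqDist O (tangentMeet f a b) = sqDist O (tangentMeet f a c))
    (h₂ : sqDist O (tangentMeet f a b) = sqDist O (tangentMeet f b c)) :
    O = tangentCircumcenter f a b c := by
  rw [tangentMeet_comm f a b] at h₂
  have hA := tangentMeet_bisector hf hbc h₁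
  have hB := tangentMeet_bisector hf hac h₂
  have hX : 8 * f * O.1 + (a * b + b * c + c * a) + 4 * f ^ 2 = 0 := by
    refine (mul_eq_zero.mp ?_).resolve_left (sub_ne_zero.mpr hab)
    linear_combination hA - hB
  have hY : 16 * f ^ 2 * O.2 = 4 * f ^ 2 * (a + b + c) - a * b * c := by
    linear_combination a * hX - hA
  unfold tangentCircumcenter
  ext
  · field_simp
    linear_combination 2 * hX
  · field_simp
    linear_combination 4 * hY

/-- The ordinate `2 Q₁.2 - y₁` of the second tangency point; `Δ ↦ -Δ` gives the third one. -/
def vertexParam (f y₁ Δ : ℝ) : ℝ :=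
  -2 * (1 + √2) * f * (4 * f * y₁ + Δ) / ((3 + 2 * √2) * y₁ ^ 2 - 4 * f ^ 2)

section vertexParam

variable {f y₁ Δ : ℝ}

theorem tangentMeet_vertexParam (hf : f ≠ 0) (hd : (3 + 2 * √2) * y₁ ^ 2 - 4 * f ^ 2 ≠ 0) :
    tangentMeet f y₁ (vertexParam f y₁ Δ) =
      ((1 + √2) * ((4 * f * y₁ + Δ) * y₁ / (2 * (2 * √2 + 3) * y₁ ^ 2 - 8 * f ^ 2)),
        (1 + √2) * (((1 + √2) * y₁ ^ 3 - 4 * (1 + √2) * f ^ 2 * y₁ - 2 * Δ * f) /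
          (2 * (2 * √2 + 3) * y₁ ^ 2 - 8 * f ^ 2))) := by
  have hs : √2 ^ 2 = 2 := sq_sqrt zero_le_two
  have hd' : y₁ ^ 2 * (3 + 2 * √2) - f ^ 2 * 4 ≠ 0 := by contrapose! hd; linear_combination hd
  rw [show 2 * (2 * √2 + 3) * y₁ ^ 2 - 8 * f ^ 2 = 2 * ((3 + 2 * √2) * y₁ ^ 2 - 4 * f ^ 2) by ring]
  unfold tangentMeet vertexParam
  ext
  · field_simp
    ring
  · field_simp
    linear_combination y₁ * (4 * f ^ 2 - y₁ ^ 2) * hs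

theorem tangentMeet_vertexParam_neg (hf : f ≠ 0)
    (hd : (3 + 2 * √2) * y₁ ^ 2 - 4 * f ^ 2 ≠ 0)
    (hΔ : Δ ^ 2 = y₁ ^ 4 + 8 * f ^ 2 * y₁ ^ 2 + 16 * (8 * √2 - 11) * f ^ 4) :
    tangentMeet f (vertexParam f y₁ Δ) (vertexParam f y₁ (-Δ)) =
      ((1 + √2) * ((5 - 3 * √2) * ((1 + 2 * √2) * y₁ ^ 2 - 28 * f ^ 2) * f /
        (7 * ((3 + 2 * √2) * y₁ ^ 2 - 4 * f ^ 2))),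
      (1 + √2) * (-(8 * f ^ 2 * y₁) / ((3 + 2 * √2) * y₁ ^ 2 - 4 * f ^ 2))) := by
  have hs : √2 ^ 2 = 2 := sq_sqrt zero_le_two
  have hd' : y₁ ^ 2 * (3 + 2 * √2) - f ^ 2 * 4 ≠ 0 := by contrapose! hd; linear_combination hd
  unfold tangentMeet vertexParam
  ext
  · field_simp
    linear_combination 16 * ((1 + 3 * √2) * y₁ ^ 4 - 48 * y₁ ^ 2 * f ^ 2 + 224 * f ^ 4) * hs +
      28 * (1 + √2) * hΔ
  · field_simp
    ring

theorem vertexParam_ne_vertexParam_neg (hf : f ≠ 0) (hΔ : Δ ≠ 0)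
    (hd : (3 + 2 * √2) * y₁ ^ 2 - 4 * f ^ 2 ≠ 0) :
    vertexParam f y₁ Δ ≠ vertexParam f y₁ (-Δ) := by
  rw [← sub_ne_zero]
  have hsub : vertexParam f y₁ Δ - vertexParam f y₁ (-Δ) =
      -4 * (1 + √2) * f * Δ / ((3 + 2 * √2) * y₁ ^ 2 - 4 * f ^ 2) := by
    unfold vertexParam
    ring
  rw [hsub]
  have : 0 < 1 + √2 := by positivity
  exact div_ne_zero (by simp [hf, hΔ, this.ne']) hd

theorem sub_vertexParam_mul_sub_vertexParam_neg_ne_zero (hf : f ≠ 0)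
    (hd : (3 + 2 * √2) * y₁ ^ 2 - 4 * f ^ 2 ≠ 0)
    (hΔ : Δ ^ 2 = y₁ ^ 4 + 8 * f ^ 2 * y₁ ^ 2 + 16 * (8 * √2 - 11) * f ^ 4) :
    (y₁ - vertexParam f y₁ Δ) * (y₁ - vertexParam f y₁ (-Δ)) ≠ 0 := by
  have hs : √2 ^ 2 = 2 := sq_sqrt zero_le_two
  have hd' : y₁ ^ 2 * (3 + 2 * √2) - f ^ 2 * 4 ≠ 0 := by contrapose! hd; linear_combination hd
  have key : (y₁ - vertexParam f y₁ Δ) * (y₁ - vertexParam f y₁ (-Δ)) *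
      ((1 + √2) * ((3 + 2 * √2) * y₁ ^ 2 - 4 * f ^ 2)) =
        (7 + 5 * √2) * y₁ ^ 4 + (40 + 24 * √2) * f ^ 2 * y₁ ^ 2 + (48 + 16 * √2) * f ^ 4 := by
    unfold vertexParam
    field_simp
    linear_combination (2 * (3 + 2 * √2) * y₁ ^ 2 * (y₁ ^ 2 + 4 * f ^ 2) ^ 2 -
      4 * (3 + √2) * f ^ 2 * Δ ^ 2 - 2560 * f ^ 6) * hs - 4 * (7 + 5 * √2) * f ^ 2 * hΔ
  intro h
  rw [h, zero_mul] at key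
  have : 0 < f ^ 4 := by positivity
  have : 0 ≤ √2 := sqrt_nonneg 2
  nlinarith [sq_nonneg (y₁ ^ 2), sq_nonneg (f * y₁)]

end vertexParam

end

theorem polar_circumcircle_through_focus_general (f y₁ Δ : ℝ) (hf : 0 < f) (Q₁ Q₂ Q₃ O : ℝ × ℝ)
    (hΔ : Δ = Real.sqrt (y₁ ^ 4 + 8 * f ^ 2 * y₁ ^ 2 + 16 * (8 * Real.sqrt 2 - 11) * f ^ 4))
    (hden₃ : (3 + 2 * Real.sqrt 2) * y₁ ^ 2 - 4 * f ^ 2 ≠ 0)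
    (hQ₁ : Q₁ = ((1 + Real.sqrt 2) * ((4 * f * y₁ + Δ) * y₁ /
        (2 * (2 * Real.sqrt 2 + 3) * y₁ ^ 2 - 8 * f ^ 2)),
      (1 + Real.sqrt 2) * (((1 + Real.sqrt 2) * y₁ ^ 3 - 4 * (1 + Real.sqrt 2) * f ^ 2 * y₁ -
        2 * Δ * f) / (2 * (2 * Real.sqrt 2 + 3) * y₁ ^ 2 - 8 * f ^ 2))))
    (hQ₂ : Q₂ = ((1 + Real.sqrt 2) * ((4 * f * y₁ - Δ) * y₁ /
        (2 * (2 * Real.sqrt 2 + 3) * y₁ ^ 2 - 8 * f ^ 2)),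
      (1 + Real.sqrt 2) * (((1 + Real.sqrt 2) * y₁ ^ 3 - 4 * (1 + Real.sqrt 2) * f ^ 2 * y₁ +
        2 * Δ * f) / (2 * (2 * Real.sqrt 2 + 3) * y₁ ^ 2 - 8 * f ^ 2))))
    (hQ₃ : Q₃ = ((1 + Real.sqrt 2) * ((5 - 3 * Real.sqrt 2) *
        ((1 + 2 * Real.sqrt 2) * y₁ ^ 2 - 28 * f ^ 2) * f /
        (7 * ((3 + 2 * Real.sqrt 2) * y₁ ^ 2 - 4 * f ^ 2))),
      (1 + Real.sqrt 2) * (-(8 * f ^ 2 * y₁) /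
        ((3 + 2 * Real.sqrt 2) * y₁ ^ 2 - 4 * f ^ 2))))
    (hO₁ : (O.1 - Q₁.1) ^ 2 + (O.2 - Q₁.2) ^ 2 = (O.1 - Q₂.1) ^ 2 + (O.2 - Q₂.2) ^ 2)
    (hO₂ : (O.1 - Q₁.1) ^ 2 + (O.2 - Q₁.2) ^ 2 = (O.1 - Q₃.1) ^ 2 + (O.2 - Q₃.2) ^ 2) :
    (O.1 - (-f)) ^ 2 + (O.2 - 0) ^ 2 = (O.1 - Q₁.1) ^ 2 + (O.2 - Q₁.2) ^ 2 := by
  have hradicand : 0 < y₁ ^ 4 + 8 * f ^ 2 * y₁ ^ 2 + 16 * (8 * √2 - 11) * f ^ 4 := by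
    have : 11 / 8 < √2 := lt_sqrt (by norm_num) |>.mpr (by norm_num)
    have : 0 < 16 * (8 * √2 - 11) * f ^ 4 := by apply mul_pos <;> [linarith; positivity]
    positivity
  have hΔsq : Δ ^ 2 = y₁ ^ 4 + 8 * f ^ 2 * y₁ ^ 2 + 16 * (8 * √2 - 11) * f ^ 4 :=
    hΔ ▸ sq_sqrt hradicand.le
  have hΔ₀ : Δ ≠ 0 := hΔ ▸ (sqrt_pos.mpr hradicand).ne'
  have h₁ : Q₁ = tangentMeet f y₁ (vertexParam f y₁ Δ) := by
    rw [hQ₁, tangentMeet_vertexParam hf.ne' hden₃]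
  have h₂ : Q₂ = tangentMeet f y₁ (vertexParam f y₁ (-Δ)) := by
    rw [hQ₂, tangentMeet_vertexParam hf.ne' hden₃]
    ring_nf
  have h₃ : Q₃ = tangentMeet f (vertexParam f y₁ Δ) (vertexParam f y₁ (-Δ)) := by
    rw [hQ₃, tangentMeet_vertexParam_neg hf.ne' hden₃ hΔsq]
  have h₁₂₃ := sub_vertexParam_mul_sub_vertexParam_neg_ne_zero hf.ne' hden₃ hΔsq
  subst h₁ h₂ h₃
  obtain rfl := eq_tangentCircumcenter hf.ne' (sub_ne_zero.mp (left_ne_zero_of_mul h₁₂₃))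
    (sub_ne_zero.mp (right_ne_zero_of_mul h₁₂₃)) (vertexParam_ne_vertexParam_neg hf.ne' hΔ₀ hden₃)
    hO₁ hO₂
  exact sqDist_tangentCircumcenter_focus hf.ne' _ _ _

/-- Over the polar triangle family, the circumcircle of `Q₁Q₂Q₃` passes through the focus
`F = (−f, 0)` of the parabola: the circumcenter `O` satisfies `|O − F| = |O − Q₁|`. -/
theorem polar_circumcircle_through_focus (f y₁ Δ : ℝ) (hf : 0 < f) (Q₁ Q₂ Q₃ O : ℝ × ℝ)
    (hΔ : Δ = Real.sqrt (y₁ ^ 4 + 8 * f ^ 2 * y₁ ^ 2 + 16 * (8 * Real.sqrt 2 - 11) * f ^ 4))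
    (hden₁ : 2 * (2 * Real.sqrt 2 + 3) * y₁ ^ 2 - 8 * f ^ 2 ≠ 0)
    (hden₃ : (3 + 2 * Real.sqrt 2) * y₁ ^ 2 - 4 * f ^ 2 ≠ 0)
    (hQ₁ : Q₁ = ((1 + Real.sqrt 2) * ((4 * f * y₁ + Δ) * y₁ /
        (2 * (2 * Real.sqrt 2 + 3) * y₁ ^ 2 - 8 * f ^ 2)),
      (1 + Real.sqrt 2) * (((1 + Real.sqrt 2) * y₁ ^ 3 - 4 * (1 + Real.sqrt 2) * f ^ 2 * y₁ -
        2 * Δ * f) / (2 * (2 * Real.sqrt 2 + 3) * y₁ ^ 2 - 8 * f ^ 2))))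
    (hQ₂ : Q₂ = ((1 + Real.sqrt 2) * ((4 * f * y₁ - Δ) * y₁ /
        (2 * (2 * Real.sqrt 2 + 3) * y₁ ^ 2 - 8 * f ^ 2)),
      (1 + Real.sqrt 2) * (((1 + Real.sqrt 2) * y₁ ^ 3 - 4 * (1 + Real.sqrt 2) * f ^ 2 * y₁ +
        2 * Δ * f) / (2 * (2 * Real.sqrt 2 + 3) * y₁ ^ 2 - 8 * f ^ 2))))
    (hQ₃ : Q₃ = ((1 + Real.sqrt 2) * ((5 - 3 * Real.sqrt 2) *
        ((1 + 2 * Real.sqrt 2) * y₁ ^ 2 - 28 * f ^ 2) * f /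
        (7 * ((3 + 2 * Real.sqrt 2) * y₁ ^ 2 - 4 * f ^ 2))),
      (1 + Real.sqrt 2) * (-(8 * f ^ 2 * y₁) /
        ((3 + 2 * Real.sqrt 2) * y₁ ^ 2 - 4 * f ^ 2))))
    (hO₁ : (O.1 - Q₁.1) ^ 2 + (O.2 - Q₁.2) ^ 2 = (O.1 - Q₂.1) ^ 2 + (O.2 - Q₂.2) ^ 2)
    (hO₂ : (O.1 - Q₁.1) ^ 2 + (O.2 - Q₁.2) ^ 2 = (O.1 - Q₃.1) ^ 2 + (O.2 - Q₃.2) ^ 2) :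
    (O.1 - (-f)) ^ 2 + (O.2 - 0) ^ 2 = (O.1 - Q₁.1) ^ 2 + (O.2 - Q₁.2) ^ 2 :=
  polar_circumcircle_through_focus_general f y₁ Δ hf Q₁ Q₂ Q₃ O hΔ hden₃ hQ₁ hQ₂ hQ₃ hO₁ hO₂
end

section
/- For Poncelet quadrilaterals inscribed in the parabola x = −y²/(4f) (focus (−f,0)) circumscribing the focus-centered circle of radius r = 2f√(√5−2), with vertices Pᵢ = (−yᵢ²/(4f), yᵢ) given by the explicit parametrization, the two diagonals P₁P₃ and P₂P₄ intersect at the fixed point W = ((2 − √5)f, 0), independent of y₁. -/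
/-- If `a * b = 4 * (2 - √5) * f ^ 2`, then `W = ((2-√5)f, 0)` is collinear with the two
parabola points of parameters `a`, `b`. -/
lemma collinear_aux (f a b : ℝ) (hf : f ≠ 0)
    (h : a * b = 4 * (2 - Real.sqrt 5) * f ^ 2) :
    (-(b ^ 2) / (4 * f) - -(a ^ 2) / (4 * f)) * (0 - a) -
      (b - a) * ((2 - Real.sqrt 5) * f - -(a ^ 2) / (4 * f)) = 0 := by
  have key : (-(b ^ 2) / (4 * f) - -(a ^ 2) / (4 * f)) * (0 - a) -
      (b - a) * ((2 - Real.sqrt 5) * f - -(a ^ 2) / (4 * f)) =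
      (b - a) * (a * b - 4 * (2 - Real.sqrt 5) * f ^ 2) / (4 * f) := by
    field_simp
    ring
  rw [key, h]
  simp

/-- For Poncelet quadrilaterals inscribed in the parabola `x = −y²/(4f)` (focus `(−f,0)`)
circumscribing the focus-centered circle of radius `r = 2f√(√5−2)`, the diagonals `P₁P₃`
and `P₂P₄` intersect at the fixed point `W = ((2 − √5)f, 0)`: `W` is collinear with
`P₁, P₃` and with `P₂, P₄`. -/
theorem quadrilateral_diagonals_fixed_point (f y₁ Δ₁ y₂ y₃ y₄ : ℝ) (hf : 0 < f)
    (hy₁ : y₁ ≠ 0)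
    (hΔ₁ : Δ₁ = Real.sqrt (y₁ ^ 4 + 8 * f ^ 2 * y₁ ^ 2 + 16 * (9 - 4 * Real.sqrt 5) * f ^ 4))
    (hden : 4 * f ^ 2 * Real.sqrt 5 - 8 * f ^ 2 - y₁ ^ 2 ≠ 0)
    (hy₂ : y₂ = (2 * Real.sqrt (Real.sqrt 5 - 2) * Δ₁ + 4 * f * y₁ * (3 - Real.sqrt 5)) * f /
      (4 * f ^ 2 * Real.sqrt 5 - 8 * f ^ 2 - y₁ ^ 2))
    (hy₃ : y₃ = 4 * (2 - Real.sqrt 5) * f ^ 2 / y₁)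
    (hy₄ : y₄ = -((2 * Real.sqrt (Real.sqrt 5 - 2) * Δ₁ + 4 * f * y₁ * (Real.sqrt 5 - 3)) * f /
      (4 * f ^ 2 * Real.sqrt 5 - 8 * f ^ 2 - y₁ ^ 2)))
    (P₁ P₂ P₃ P₄ W : ℝ × ℝ)
    (hP₁ : P₁ = (-(y₁ ^ 2) / (4 * f), y₁)) (hP₂ : P₂ = (-(y₂ ^ 2) / (4 * f), y₂))
    (hP₃ : P₃ = (-(y₃ ^ 2) / (4 * f), y₃)) (hP₄ : P₄ = (-(y₄ ^ 2) / (4 * f), y₄))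
    (hW : W = ((2 - Real.sqrt 5) * f, 0)) :
    (P₃.1 - P₁.1) * (W.2 - P₁.2) - (P₃.2 - P₁.2) * (W.1 - P₁.1) = 0 ∧
    (P₄.1 - P₂.1) * (W.2 - P₂.2) - (P₄.2 - P₂.2) * (W.1 - P₂.1) = 0 := by
  have hfne : f ≠ 0 := ne_of_gt hf
  have ht5 : Real.sqrt 5 ^ 2 = 5 := Real.sq_sqrt (by norm_num)
  have ht0 : (0:ℝ) ≤ Real.sqrt 5 := Real.sqrt_nonneg 5
  have ht2 : (2:ℝ) ≤ Real.sqrt 5 := by nlinarith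
  have ht94 : Real.sqrt 5 ≤ 9 / 4 := by nlinarith
  have hs2 : Real.sqrt (Real.sqrt 5 - 2) ^ 2 = Real.sqrt 5 - 2 :=
    Real.sq_sqrt (by linarith)
  have hΔ2 : Δ₁ ^ 2 = y₁ ^ 4 + 8 * f ^ 2 * y₁ ^ 2 + 16 * (9 - 4 * Real.sqrt 5) * f ^ 4 := by
    have h9 : (0:ℝ) ≤ 9 - 4 * Real.sqrt 5 := by linarith
    have harg : (0:ℝ) ≤ y₁ ^ 4 + 8 * f ^ 2 * y₁ ^ 2 + 16 * (9 - 4 * Real.sqrt 5) * f ^ 4 := by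
      have h1 : (0:ℝ) ≤ y₁ ^ 4 := by positivity
      have h2 : (0:ℝ) ≤ 8 * f ^ 2 * y₁ ^ 2 := by positivity
      have h3 : (0:ℝ) ≤ 16 * (9 - 4 * Real.sqrt 5) * f ^ 4 := by positivity
      linarith
    rw [hΔ₁]
    exact Real.sq_sqrt harg
  have key13 : y₁ * y₃ = 4 * (2 - Real.sqrt 5) * f ^ 2 := by
    rw [hy₃]; field_simp
  have key24 : y₂ * y₄ = 4 * (2 - Real.sqrt 5) * f ^ 2 := by
    rw [hy₂, hy₄]
    rw [mul_neg, div_mul_div_comm, ← neg_div, div_eq_iff (mul_ne_zero hden hden)]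
    linear_combination (64 * f ^ 6 * (Real.sqrt 5 - 2) - 16 * f ^ 4 * y₁ ^ 2) * ht5 -
      4 * f ^ 2 * Δ₁ ^ 2 * hs2 - 4 * f ^ 2 * (Real.sqrt 5 - 2) * hΔ2
  constructor
  · rw [hP₁, hP₃, hW]
    exact collinear_aux f y₁ y₃ hfne key13
  · rw [hP₂, hP₄, hW]
    exact collinear_aux f y₂ y₄ hfne key24
end

section
/- For the polar quadrilateral family (tangent lines to the parabola at the four vertices of the Poncelet quadrilateral), each vertex lies on the hyperbola (x−f)²/(4(√5−2)f²) − y²/(4f²) − 1 = 0, centered at (f, 0) with foci (f ± 2f√(√5−1), 0). -/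
/-!
The tangents to the parabola at ordinates `a, b` meet on the hyperbola
`(x - f)² / (4kf²) - y² / (4f²) = 1` exactly when the symmetric biquadratic `P(a, b) = (ab + 4f²)² - 4kf²(a + b)² - 64kf⁴` vanishes.
As a quadratic in `b`, `P(y₁, b)` has discriminant `16kf²Δ₁²`, and its two roots are `y₂` and `y₄`.
For `k = √5 - 2`, a root of `k² + 4k - 1 = 0`, the involution `a ↦ -4kf²/a` rescales `P(a, ·)`,
so `y₂` and `y₄` are also the roots of `P(y₃, ·)`. By symmetry of `P` all four vertices lie on
the hyperbola.
-/

noncomputable def tangentIntersection (f a b : ℝ) : ℝ × ℝ :=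
  (-(a * b) / (4 * f), (a + b) / 2)

noncomputable def hyperbolaEq (k f : ℝ) (p : ℝ × ℝ) : ℝ :=
  (p.1 - f) ^ 2 / (4 * k * f ^ 2) - p.2 ^ 2 / (4 * f ^ 2) - 1

def polarRelation (k f a b : ℝ) : ℝ :=
  (a * b + 4 * f ^ 2) ^ 2 - 4 * k * f ^ 2 * (a + b) ^ 2 - 64 * k * f ^ 4

section PolarRelation

variable {k f a b : ℝ}

theorem polarRelation_comm (k f a b : ℝ) : polarRelation k f a b = polarRelation k f b a := by
  unfold polarRelation; ring

theorem polarRelation_eq_quadratic (k f a b : ℝ) :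
    polarRelation k f a b = (a ^ 2 - 4 * k * f ^ 2) * (b * b) + 8 * (1 - k) * f ^ 2 * a * b
      + (16 * f ^ 4 - 4 * k * f ^ 2 * a ^ 2 - 64 * k * f ^ 4) := by
  unfold polarRelation; ring

theorem hyperbolaEq_tangentIntersection (hf : f ≠ 0) (hk : k ≠ 0) :
    hyperbolaEq k f (tangentIntersection f a b) = polarRelation k f a b / (64 * k * f ^ 4) := by
  unfold hyperbolaEq tangentIntersection polarRelation
  field_simp
  ring

theorem polarRelation_eq_zero_iff {r Δ : ℝ} (hA : a ^ 2 - 4 * k * f ^ 2 ≠ 0) (hr : r ^ 2 = k)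
    (hΔ : Δ ^ 2 = a ^ 4 + 8 * f ^ 2 * a ^ 2 + 16 * (1 - 4 * k) * f ^ 4) :
    polarRelation k f a b = 0 ↔
      b = (-4 * (1 - k) * f ^ 2 * a + 2 * r * f * Δ) / (a ^ 2 - 4 * k * f ^ 2) ∨
      b = (-4 * (1 - k) * f ^ 2 * a - 2 * r * f * Δ) / (a ^ 2 - 4 * k * f ^ 2) := by
  have hdisc : discrim (a ^ 2 - 4 * k * f ^ 2) (8 * (1 - k) * f ^ 2 * a)
      (16 * f ^ 4 - 4 * k * f ^ 2 * a ^ 2 - 64 * k * f ^ 4) = (4 * r * f * Δ) * (4 * r * f * Δ) := by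
    unfold discrim
    linear_combination (-16 * k * f ^ 2) * hΔ + (-16 * f ^ 2 * Δ ^ 2) * hr
  rw [polarRelation_eq_quadratic, quadratic_eq_zero_iff hA hdisc]
  congr! 2 <;> field_simp <;> ring

theorem ne_zero_of_sq_add_four_mul_sub_one_eq_zero (hk : k ^ 2 + 4 * k - 1 = 0) : k ≠ 0 := by
  rintro rfl
  norm_num at hk

theorem polarRelation_eq_zero_iff_of_mul_eq {a' : ℝ} (hk : k ^ 2 + 4 * k - 1 = 0) (hf : f ≠ 0)
    (ha : a ≠ 0) (h : a * a' = -4 * k * f ^ 2) :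
    polarRelation k f a' b = 0 ↔ polarRelation k f a b = 0 := by
  have hk0 := ne_zero_of_sq_add_four_mul_sub_one_eq_zero hk
  have key : a ^ 2 * polarRelation k f a' b = -4 * k * f ^ 2 * polarRelation k f a b := by
    unfold polarRelation
    linear_combination (b * (a * a' * b - 4 * k * f ^ 2 * b + 8 * f ^ 2 * a)
      - 4 * k * f ^ 2 * (a * a' - 4 * k * f ^ 2 + 2 * a * b)) * h
      - (16 * f ^ 4 * a ^ 2 + 64 * k * f ^ 6) * hk
  rw [← mul_eq_zero_iff_left (pow_ne_zero 2 ha), key,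
    mul_eq_zero_iff_left (by simp [hk0, hf])]

theorem tangentIntersections_on_hyperbola {c d : ℝ} (hk : k ^ 2 + 4 * k - 1 = 0) (hf : f ≠ 0)
    (ha : a ≠ 0) (hac : a * c = -4 * k * f ^ 2)
    (hb : polarRelation k f a b = 0) (hd : polarRelation k f a d = 0) :
    hyperbolaEq k f (tangentIntersection f a b) = 0 ∧
    hyperbolaEq k f (tangentIntersection f b c) = 0 ∧
    hyperbolaEq k f (tangentIntersection f c d) = 0 ∧
    hyperbolaEq k f (tangentIntersection f d a) = 0 := by
  have hk0 := ne_zero_of_sq_add_four_mul_sub_one_eq_zero hk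
  have hc (x : ℝ) : polarRelation k f c x = 0 ↔ polarRelation k f a x = 0 :=
    polarRelation_eq_zero_iff_of_mul_eq hk hf ha hac
  simp only [hyperbolaEq_tangentIntersection hf hk0, div_eq_zero_iff]
  refine ⟨.inl hb, .inl ?_, .inl ((hc d).2 hd), .inl ?_⟩
  · rw [polarRelation_comm, hc]; exact hb
  · rw [polarRelation_comm]; exact hd

end PolarRelation

/-- Each vertex of the polar quadrilateral (intersection of consecutive tangent lines to the
parabola `x = −y²/(4f)` at the Poncelet quadrilateral's vertices; the tangents at parameters
`a, b` meet at `(−ab/(4f), (a+b)/2)`) lies on the hyperbola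
`(x−f)²/(4(√5−2)f²) − y²/(4f²) − 1 = 0`, centered at `(f,0)`, whose foci are at
`(f ± 2f√(√5−1), 0)` (i.e. `c² = a² + b²` holds with `c = 2f√(√5−1)`). -/
theorem polar_quadrilateral_on_hyperbola (f y₁ Δ₁ y₂ y₃ y₄ : ℝ) (hf : 0 < f)
    (hy₁ : y₁ ≠ 0)
    (hΔ₁ : Δ₁ = Real.sqrt (y₁ ^ 4 + 8 * f ^ 2 * y₁ ^ 2 + 16 * (9 - 4 * Real.sqrt 5) * f ^ 4))
    (hden : 4 * f ^ 2 * Real.sqrt 5 - 8 * f ^ 2 - y₁ ^ 2 ≠ 0)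
    (hy₂ : y₂ = (2 * Real.sqrt (Real.sqrt 5 - 2) * Δ₁ + 4 * f * y₁ * (3 - Real.sqrt 5)) * f /
      (4 * f ^ 2 * Real.sqrt 5 - 8 * f ^ 2 - y₁ ^ 2))
    (hy₃ : y₃ = 4 * (2 - Real.sqrt 5) * f ^ 2 / y₁)
    (hy₄ : y₄ = -((2 * Real.sqrt (Real.sqrt 5 - 2) * Δ₁ + 4 * f * y₁ * (Real.sqrt 5 - 3)) * f /
      (4 * f ^ 2 * Real.sqrt 5 - 8 * f ^ 2 - y₁ ^ 2)))
    (Q₁ Q₂ Q₃ Q₄ : ℝ × ℝ)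
    (hQ₁ : Q₁ = (-(y₁ * y₂) / (4 * f), (y₁ + y₂) / 2))
    (hQ₂ : Q₂ = (-(y₂ * y₃) / (4 * f), (y₂ + y₃) / 2))
    (hQ₃ : Q₃ = (-(y₃ * y₄) / (4 * f), (y₃ + y₄) / 2))
    (hQ₄ : Q₄ = (-(y₄ * y₁) / (4 * f), (y₄ + y₁) / 2)) :
    ((Q₁.1 - f) ^ 2 / (4 * (Real.sqrt 5 - 2) * f ^ 2) - Q₁.2 ^ 2 / (4 * f ^ 2) - 1 = 0) ∧
    ((Q₂.1 - f) ^ 2 / (4 * (Real.sqrt 5 - 2) * f ^ 2) - Q₂.2 ^ 2 / (4 * f ^ 2) - 1 = 0) ∧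
    ((Q₃.1 - f) ^ 2 / (4 * (Real.sqrt 5 - 2) * f ^ 2) - Q₃.2 ^ 2 / (4 * f ^ 2) - 1 = 0) ∧
    ((Q₄.1 - f) ^ 2 / (4 * (Real.sqrt 5 - 2) * f ^ 2) - Q₄.2 ^ 2 / (4 * f ^ 2) - 1 = 0) ∧
    (2 * f * Real.sqrt (Real.sqrt 5 - 1)) ^ 2 =
      4 * (Real.sqrt 5 - 2) * f ^ 2 + 4 * f ^ 2 := by
  have h5 : Real.sqrt 5 ^ 2 = 5 := Real.sq_sqrt (by norm_num)
  have h5lo : 2 < Real.sqrt 5 := by nlinarith [Real.sqrt_nonneg 5]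
  have h5hi : Real.sqrt 5 < 9 / 4 := by nlinarith [Real.sqrt_nonneg 5]
  have hk : (Real.sqrt 5 - 2) ^ 2 + 4 * (Real.sqrt 5 - 2) - 1 = 0 := by linear_combination h5
  have hr : Real.sqrt (Real.sqrt 5 - 2) ^ 2 = Real.sqrt 5 - 2 := Real.sq_sqrt (by linarith)
  have hA : y₁ ^ 2 - 4 * (Real.sqrt 5 - 2) * f ^ 2 ≠ 0 := fun h ↦ hden (by linear_combination -h)
  have hΔ : Δ₁ ^ 2 = y₁ ^ 4 + 8 * f ^ 2 * y₁ ^ 2 + 16 * (1 - 4 * (Real.sqrt 5 - 2)) * f ^ 4 := by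
    have : 0 ≤ 9 - 4 * Real.sqrt 5 := by linarith
    rw [hΔ₁, Real.sq_sqrt (by positivity)]
    ring
  have h₂ : polarRelation (Real.sqrt 5 - 2) f y₁ y₂ = 0 := by
    refine (polarRelation_eq_zero_iff hA hr hΔ).2 (.inr ?_)
    rw [hy₂, div_eq_div_iff hden hA]
    ring
  have h₄ : polarRelation (Real.sqrt 5 - 2) f y₁ y₄ = 0 := by
    refine (polarRelation_eq_zero_iff hA hr hΔ).2 (.inl ?_)
    rw [hy₄, ← neg_div, div_eq_div_iff hden hA]
    ring
  have h₃ : y₁ * y₃ = -4 * (Real.sqrt 5 - 2) * f ^ 2 := by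
    rw [hy₃]
    field_simp
    ring
  subst hQ₁ hQ₂ hQ₃ hQ₄
  obtain ⟨on₁, on₂, on₃, on₄⟩ := tangentIntersections_on_hyperbola hk hf.ne' hy₁ h₃ h₂ h₄
  exact ⟨on₁, on₂, on₃, on₄,
    by linear_combination 4 * f ^ 2 * Real.sq_sqrt (by linarith : 0 ≤ Real.sqrt 5 - 1)⟩
end
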